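/- Let β ∈ (1,2) and n ≥ 1, and define m_n(β) = sup over x ∈ [0,1/(β-1)] of the number of words (a_1,…,a_n) ∈ {0,1}^n with x ∈ [(a)_L, (a)_U]. Then H_β ≥ log(2 / m_n(β)^{1/n}) / log β. -/

import Mathlib

open scoped Classical

/-- The value `∑_{k=1}^n a_k β^{-k}` of a 0-1 word `a`. -/
noncomputable def wordVal (β : ℝ) {n : ℕ} (a : Fin n → Bool) : ℝ :=
  ∑ i : Fin n, if a i then (1 / β) ^ ((i : ℕ) + 1) else 0

/-- `D_n(β)`, the (finite) set of values of all 0-1 words of length `n`. -/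
noncomputable def Dn (β : ℝ) (n : ℕ) : Finset ℝ :=
  Finset.image (fun a : Fin n → Bool => wordVal β a) Finset.univ

/-- `p_n(x)`, the number of 0-1 words of length `n` with value `x`. -/
noncomputable def pn (β : ℝ) (n : ℕ) (x : ℝ) : ℕ :=
  (Finset.univ.filter (fun a : Fin n → Bool => wordVal β a = x)).card

/-- `H_n(β)`, the entropy of the distribution `{p_n(x)/2^n : x ∈ D_n(β)}`. -/
noncomputable def Hn (β : ℝ) (n : ℕ) : ℝ :=
  -∑ x ∈ Dn β n, ((pn β n x : ℝ) / 2 ^ n) * Real.log ((pn β n x : ℝ) / 2 ^ n)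

/-- The number of 0-1 words `a` of length `n` with
`x ∈ [(a)_L, (a)_L + β^{-n}/(β-1)]`. -/
noncomputable def mCount (β : ℝ) (n : ℕ) (x : ℝ) : ℕ :=
  (Finset.univ.filter (fun a : Fin n → Bool =>
    wordVal β a ≤ x ∧ x ≤ wordVal β a + (1 / β) ^ n * (1 / (β - 1)))).card

/-- `m_n(β)`, the supremum over `x ∈ [0, 1/(β-1)]` of the number of words whose
associated interval contains `x`. -/
noncomputable def mn (β : ℝ) (n : ℕ) : ℕ :=
  sSup {m : ℕ | ∃ x ∈ Set.Icc (0 : ℝ) (1 / (β - 1)), m = mCount β n x}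

section Aux

variable {β : ℝ}

lemma wordVal_nonneg (hβ : 1 < β) {m : ℕ} (a : Fin m → Bool) : 0 ≤ wordVal β a := by
  apply Finset.sum_nonneg
  intro i _
  have hb : (0:ℝ) < β := by linarith
  split <;> positivity

lemma geom_aux (hβ : 1 < β) (m : ℕ) :
    (∑ i : Fin m, (1/β) ^ ((i:ℕ)+1)) + (1/β)^m * (1/(β-1)) = 1/(β-1) := by
  have hβ0 : β ≠ 0 := by intro h; rw [h] at hβ; linarith
  have hβ1 : β - 1 ≠ 0 := sub_ne_zero.mpr (ne_of_gt hβ)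
  induction m with
  | zero => simp
  | succ m ih =>
    rw [Fin.sum_univ_castSucc]
    simp only [Fin.coe_castSucc, Fin.val_last]
    have key : (1/β)^(m+1) + (1/β)^(m+1)*(1/(β-1)) = (1/β)^m * (1/(β-1)) := by
      field_simp
      ring_nf
      simp [hβ0]
    linarith [ih, key]

lemma wordVal_add_le (hβ : 1 < β) {m : ℕ} (a : Fin m → Bool) :
    wordVal β a + (1/β)^m * (1/(β-1)) ≤ 1/(β-1) := by
  have h1 : wordVal β a ≤ ∑ i : Fin m, (1/β) ^ ((i:ℕ)+1) := by
    apply Finset.sum_le_sum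
    intro i _
    have hb : (0:ℝ) < β := by linarith
    have h : (0:ℝ) ≤ (1/β) ^ ((i:ℕ)+1) := by positivity
    split
    · exact le_rfl
    · exact h
  linarith [geom_aux hβ m]

lemma wordVal_append (hβ0 : β ≠ 0) {j k : ℕ} (p : Fin j → Bool) (s : Fin k → Bool) :
    wordVal β (Fin.append p s) = wordVal β p + (1/β)^j * wordVal β s := by
  unfold wordVal
  rw [Fin.sum_univ_add, Finset.mul_sum]
  congr 1
  · apply Finset.sum_congr rfl
    intro i _
    rw [Fin.append_left]
    simp
  · apply Finset.sum_congr rfl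
    intro i _
    rw [Fin.append_right]
    simp only [Fin.coe_natAdd]
    split
    · rw [← pow_add, add_assoc]
    · rw [mul_zero]

lemma mCount_le_two_pow (β : ℝ) (k : ℕ) (x : ℝ) : mCount β k x ≤ 2^k := by
  unfold mCount
  calc _ ≤ (Finset.univ : Finset (Fin k → Bool)).card := Finset.card_filter_le _ _
    _ = 2^k := by simp [Finset.card_univ]

lemma mCount_le_mn (hx : x ∈ Set.Icc (0:ℝ) (1/(β-1))) (k : ℕ) :
    mCount β k x ≤ mn β k := by
  apply le_csSup
  · exact ⟨2^k, fun m hm => by obtain ⟨y, _, rfl⟩ := hm; exact mCount_le_two_pow β k y⟩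
  · exact ⟨x, hx, rfl⟩

lemma one_le_mn (hβ : 1 < β) (k : ℕ) : 1 ≤ mn β k := by
  have hb1 : (0:ℝ) < β - 1 := by linarith
  have hb : (0:ℝ) < β := by linarith
  have h0 : (0:ℝ) ∈ Set.Icc (0:ℝ) (1/(β-1)) := ⟨le_rfl, by positivity⟩
  have h1 : 1 ≤ mCount β k 0 := by
    rw [Nat.one_le_iff_ne_zero, ← Nat.pos_iff_ne_zero]
    apply Finset.card_pos.mpr
    refine ⟨fun _ => false, Finset.mem_filter.mpr ⟨Finset.mem_univ _, ?_, ?_⟩⟩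
    · simp [wordVal]
    · have : wordVal β (fun _ : Fin k => false) = 0 := by simp [wordVal]
      rw [this]
      positivity
  exact h1.trans (mCount_le_mn h0 k)


lemma mCount_submul (hβ : 1 < β) (j k : ℕ) (x : ℝ) :
    mCount β (j + k) x ≤ mCount β j x * mn β k := by
  have hb : (0:ℝ) < β := by linarith
  have hb1 : (0:ℝ) < β - 1 := by linarith
  have hβ0 : β ≠ 0 := ne_of_gt hb
  set P : (Fin (j+k) → Bool) → Prop := fun a =>
    wordVal β a ≤ x ∧ x ≤ wordVal β a + (1/β)^(j+k) * (1/(β-1)) with hP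
  have hcard : mCount β (j+k) x
      = ∑ p : Fin j → Bool,
        (Finset.univ.filter (fun s : Fin k → Bool => P (Fin.append p s))).card := by
    unfold mCount
    rw [Finset.card_filter]
    rw [← Fintype.sum_equiv (Fin.appendEquiv j k)
      (fun pr : (Fin j → Bool) × (Fin k → Bool) => if P (Fin.append pr.1 pr.2) then 1 else 0)
      (fun a => if P a then 1 else 0) (fun pr => rfl)]
    rw [Fintype.sum_prod_type]
    refine Finset.sum_congr rfl (fun p _ => ?_)
    rw [Finset.card_filter]
  set Q : (Fin j → Bool) → Prop := fun p =>
    wordVal β p ≤ x ∧ x ≤ wordVal β p + (1/β)^j * (1/(β-1)) with hQ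
  have hinner : ∀ p : Fin j → Bool,
      (Finset.univ.filter (fun s : Fin k → Bool => P (Fin.append p s))).card ≤
      (if Q p then mn β k else 0) := by
    intro p
    rcases Finset.eq_empty_or_nonempty
      (Finset.univ.filter (fun s : Fin k → Bool => P (Fin.append p s))) with he | hne
    · rw [he]
      simp only [Finset.card_empty]
      exact Nat.zero_le _
    · obtain ⟨s₀, hs₀⟩ := hne
      obtain ⟨h1, h2⟩ := (Finset.mem_filter.mp hs₀).2
      rw [wordVal_append hβ0 p s₀] at h1 h2
      have hws₀ := wordVal_nonneg hβ s₀
      have hwa := wordVal_add_le hβ s₀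
      have hpow : (0:ℝ) < (1/β)^j := by positivity
      have hpk : ((1:ℝ)/β)^(j+k) = (1/β)^j * (1/β)^k := pow_add _ _ _
      rw [hpk] at h2
      have hQp : Q p := by
        constructor
        · nlinarith
        · nlinarith [mul_le_mul_of_nonneg_left hwa hpow.le]
      rw [if_pos hQp]
      set y : ℝ := (x - wordVal β p) * β^j with hy
      have hA : (0:ℝ) < β^j := by positivity
      have hmul : (1/β)^j * β^j = 1 := by
        rw [div_pow, one_pow, div_mul_cancel₀]
        exact ne_of_gt hA
      have emul : ∀ w : ℝ, (1/β)^j * w * β^j = w := fun w => by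
        rw [mul_right_comm, hmul, one_mul]
      have hy0 : wordVal β s₀ ≤ y := by
        rw [hy]
        linarith [mul_le_mul_of_nonneg_right h1 hA.le, emul (wordVal β s₀)]
      have hy1 : y ≤ wordVal β s₀ + (1/β)^k * (1/(β-1)) := by
        rw [hy]
        linarith [mul_le_mul_of_nonneg_right h2 hA.le, emul (wordVal β s₀),
          emul ((1/β)^k * (1/(β-1)))]
      have hyI : y ∈ Set.Icc (0:ℝ) (1/(β-1)) := ⟨le_trans hws₀ hy0, by linarith⟩
      calc (Finset.univ.filter (fun s : Fin k → Bool => P (Fin.append p s))).card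
          ≤ mCount β k y := by
            apply Finset.card_le_card
            intro s hs
            obtain ⟨h1', h2'⟩ := (Finset.mem_filter.mp hs).2
            rw [wordVal_append hβ0 p s] at h1' h2'
            rw [hpk] at h2'
            refine Finset.mem_filter.mpr ⟨Finset.mem_univ _, ?_, ?_⟩
            · rw [hy]
              linarith [mul_le_mul_of_nonneg_right h1' hA.le, emul (wordVal β s)]
            · rw [hy]
              linarith [mul_le_mul_of_nonneg_right h2' hA.le, emul (wordVal β s),
                emul ((1/β)^k * (1/(β-1)))]
        _ ≤ mn β k := mCount_le_mn hyI k
  rw [hcard]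
  calc ∑ p : Fin j → Bool,
        (Finset.univ.filter (fun s : Fin k → Bool => P (Fin.append p s))).card
      ≤ ∑ p : Fin j → Bool, (if Q p then mn β k else 0) :=
        Finset.sum_le_sum (fun p _ => hinner p)
    _ = (Finset.univ.filter Q).card * mn β k := by
        rw [Finset.sum_ite, Finset.sum_const, Finset.sum_const_zero, add_zero, smul_eq_mul]
    _ = mCount β j x * mn β k := rfl

lemma mCount_le_iter (hβ : 1 < β) (n q r : ℕ) (x : ℝ) :
    mCount β (r + q * n) x ≤ 2^r * (mn β n)^q := by
  induction q with
  | zero => simpa using mCount_le_two_pow β r x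
  | succ q ih =>
    have hidx : r + (q+1) * n = (r + q*n) + n := by ring
    rw [hidx]
    calc mCount β ((r + q*n) + n) x ≤ mCount β (r + q*n) x * mn β n := mCount_submul hβ _ _ _
      _ ≤ (2^r * (mn β n)^q) * mn β n := Nat.mul_le_mul_right _ ih
      _ = 2^r * (mn β n)^(q+1) := by ring

lemma pn_le_mCount (hβ : 1 < β) (m : ℕ) (x : ℝ) : pn β m x ≤ mCount β m x := by
  have hb1 : (0:ℝ) < β - 1 := by linarith
  have hb : (0:ℝ) < β := by linarith
  apply Finset.card_le_card
  intro a ha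
  have h := (Finset.mem_filter.mp ha).2
  refine Finset.mem_filter.mpr ⟨Finset.mem_univ _, le_of_eq h, ?_⟩
  rw [h]
  have : (0:ℝ) ≤ (1/β)^m * (1/(β-1)) := by positivity
  linarith

lemma sum_pn (β : ℝ) (m : ℕ) : ∑ x ∈ Dn β m, (pn β m x) = 2^m := by
  have h := Finset.card_eq_sum_card_fiberwise
    (f := fun a : Fin m → Bool => wordVal β a)
    (s := Finset.univ) (t := Dn β m)
    (fun a _ => Finset.mem_image_of_mem _ (Finset.mem_univ a))
  rw [Finset.card_univ] at h
  have hc : Fintype.card (Fin m → Bool) = 2^m := by simp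
  rw [hc] at h
  exact h.symm

lemma one_le_pn {m : ℕ} {x : ℝ} (hx : x ∈ Dn β m) : 1 ≤ pn β m x := by
  obtain ⟨a, -, ha⟩ := Finset.mem_image.mp hx
  exact Finset.card_pos.mpr ⟨a, Finset.mem_filter.mpr ⟨Finset.mem_univ _, ha⟩⟩

end Aux

theorem entropy_ge_of_mn (β : ℝ) (hβ1 : 1 < β) (hβ2 : β < 2) (n : ℕ) (hn : 1 ≤ n) :
    ∀ L : ℝ,
      Filter.Tendsto (fun m : ℕ => Hn β m / (m * Real.log β))
        Filter.atTop (nhds L) →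
      Real.log (2 / (mn β n : ℝ) ^ ((n : ℝ)⁻¹)) / Real.log β ≤ L := by
  intro L hL
  have hb : (0:ℝ) < β := lt_trans one_pos hβ1
  have hlogβ : 0 < Real.log β := Real.log_pos hβ1
  set M := mn β n with hM
  have hM1 : 1 ≤ M := one_le_mn hβ1 n
  have hM1R : (1:ℝ) ≤ (M:ℝ) := by exact_mod_cast hM1
  have hMpos : (0:ℝ) < (M:ℝ) := by linarith
  set lam : ℝ := (M:ℝ) ^ ((n:ℝ)⁻¹) with hlam
  have hlam1 : 1 ≤ lam := Real.one_le_rpow hM1R (by positivity)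
  have hlam0 : (0:ℝ) < lam := by linarith
  have hn0 : ((n:ℝ)) ≠ 0 := Nat.cast_ne_zero.mpr (by omega)
  have hlampow : lam ^ n = (M:ℝ) := by
    rw [hlam, ← Real.rpow_natCast ((M:ℝ) ^ ((n:ℝ)⁻¹)) n, ← Real.rpow_mul (le_of_lt hMpos),
      inv_mul_cancel₀ hn0, Real.rpow_one]
  have hkey : ∀ (m : ℕ) (x : ℝ), (pn β m x : ℝ) ≤ 2^n * lam^m := by
    intro m x
    have h1 : pn β m x ≤ 2^(m % n) * M^(m / n) := by
      have h := mCount_le_iter hβ1 n (m / n) (m % n) x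
      rw [Nat.mod_add_div' m n] at h
      exact le_trans (pn_le_mCount hβ1 m x) h
    have e1 : ((2:ℝ))^(m % n) ≤ 2^n :=
      pow_le_pow_right₀ one_le_two (le_of_lt (Nat.mod_lt m (by omega)))
    have e2 : (M:ℝ)^(m / n) ≤ lam^m := by
      calc (M:ℝ)^(m/n) = (lam^n)^(m/n) := by rw [hlampow]
        _ = lam^(n * (m/n)) := (pow_mul _ _ _).symm
        _ ≤ lam^m := by
            apply pow_le_pow_right₀ hlam1
            calc n * (m/n) = (m/n) * n := Nat.mul_comm _ _
              _ ≤ m := Nat.div_mul_le_self m n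
    calc (pn β m x : ℝ) ≤ ((2^(m%n) * M^(m/n) : ℕ) : ℝ) := by exact_mod_cast h1
      _ = (2:ℝ)^(m%n) * (M:ℝ)^(m/n) := by push_cast; ring
      _ ≤ 2^n * lam^m := by
          apply mul_le_mul e1 e2 (by positivity) (by positivity)
  have hHn : ∀ m : ℕ,
      (m:ℝ) * Real.log 2 - n * Real.log 2 - m * Real.log lam ≤ Hn β m := by
    intro m
    set K : ℝ := (m:ℝ)*Real.log 2 - n*Real.log 2 - m*Real.log lam with hK
    have hsum : ∑ x ∈ Dn β m, ((pn β m x : ℝ)) = 2^m := by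
      rw [← Nat.cast_sum, sum_pn β m]
      push_cast
      ring
    have hterm : ∀ x ∈ Dn β m,
        ((pn β m x:ℝ)/2^m) * K ≤
          -(((pn β m x:ℝ)/2^m) * Real.log ((pn β m x:ℝ)/2^m)) := by
      intro x hx
      have hp1 : (1:ℝ) ≤ (pn β m x : ℝ) := by exact_mod_cast one_le_pn hx
      have hppos : (0:ℝ) < (pn β m x : ℝ) := by linarith
      have hple : (pn β m x : ℝ) ≤ 2^n * lam^m := hkey m x
      have hlog : Real.log ((pn β m x:ℝ)/2^m)
          = Real.log (pn β m x : ℝ) - m * Real.log 2 := by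
        rw [Real.log_div (ne_of_gt hppos) (by positivity), Real.log_pow]
      have hlogp : Real.log (pn β m x:ℝ) ≤ n * Real.log 2 + m * Real.log lam := by
        calc Real.log (pn β m x:ℝ) ≤ Real.log (2^n * lam^m) := Real.log_le_log hppos hple
          _ = n*Real.log 2 + m*Real.log lam := by
              rw [Real.log_mul (by positivity) (by positivity), Real.log_pow, Real.log_pow]
      have ht0 : (0:ℝ) ≤ (pn β m x:ℝ)/2^m := by positivity
      rw [hlog]
      have hKle : K ≤ (m:ℝ) * Real.log 2 - Real.log (pn β m x:ℝ) := by
        rw [hK]; linarith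
      calc ((pn β m x:ℝ)/2^m) * K
          ≤ ((pn β m x:ℝ)/2^m) * ((m:ℝ) * Real.log 2 - Real.log (pn β m x:ℝ)) :=
            mul_le_mul_of_nonneg_left hKle ht0
        _ = -(((pn β m x:ℝ)/2^m) * (Real.log (pn β m x:ℝ) - m * Real.log 2)) := by ring
    have hge : ∑ x ∈ Dn β m, ((pn β m x:ℝ)/2^m) * K ≤ Hn β m := by
      unfold Hn
      rw [← Finset.sum_neg_distrib]
      exact Finset.sum_le_sum hterm
    have hsum1 : ∑ x ∈ Dn β m, ((pn β m x:ℝ)/2^m) * K = K := by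
      rw [← Finset.sum_mul, ← Finset.sum_div, hsum, div_self (by positivity), one_mul]
    linarith [hge, hsum1.le, hsum1.ge]
  set T : ℝ := (Real.log 2 - Real.log lam) / Real.log β with hT
  have htarget : Real.log (2 / lam) / Real.log β = T := by
    rw [hT, Real.log_div two_ne_zero (ne_of_gt hlam0)]
  rw [htarget]
  set c : ℝ := (n:ℝ) * Real.log 2 / Real.log β with hc
  have hg : Filter.Tendsto (fun m : ℕ => T - c * (1/(m:ℝ))) Filter.atTop (nhds T) := by
    have h0 := tendsto_one_div_atTop_nhds_zero_nat.const_mul c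
    have h2 := (tendsto_const_nhds (x := T) (f := Filter.atTop (α := ℕ))).sub h0
    simpa using h2
  refine le_of_tendsto_of_tendsto hg hL ?_
  filter_upwards [Filter.eventually_ge_atTop 1] with m hm
  have hm0 : (0:ℝ) < (m:ℝ) := by exact_mod_cast Nat.lt_of_lt_of_le Nat.zero_lt_one hm
  have hD : (0:ℝ) < (m:ℝ) * Real.log β := by positivity
  have heq : ((m:ℝ)*Real.log 2 - n*Real.log 2 - m*Real.log lam) / ((m:ℝ)*Real.log β)
      = T - c * (1/(m:ℝ)) := by
    rw [hT, hc]
    field_simp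
    ring
  calc T - c * (1/(m:ℝ))
      = ((m:ℝ)*Real.log 2 - n*Real.log 2 - m*Real.log lam) / ((m:ℝ)*Real.log β) := heq.symm
    _ ≤ Hn β m / ((m:ℝ) * Real.log β) := (div_le_div_iff_of_pos_right hD).mpr (hHn m)
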